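/- arXiv:2502.01235 — 3 statements merged into one kernel-verified Lean document; each statement's English description precedes it below -/
import Mathlib

section
/- Let G = U S Vᵀ be the full SVD of a d×d matrix G, let η > 0, A_0 ∈ ℝ^{d×r}, and B_0 = 0. Define Z_t = H^t [A_0; 0] where H = [[I_d, ηG],[ηGᵀ, I_d]], writing Z_t = [A_t; B_tᵀ]. Then A_t = (1/2) U((I + ηS)^t + (I − ηS)^t) Uᵀ A_0 and B_tᵀ = (1/2) V((I + ηS)^t − (I − ηS)^t) Uᵀ A_0. -/
/-!
With `s = η • S` symmetric, the block diagonal matrix `P = diag(U, V)` intertwines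
`K = [[1, s], [s, 1]]` with `H`: `P K = H P`, hence `P K^t = H^t P`.
The powers of `K` are explicit because `K` acts as `1 + s` on vectors `[x; x]` and as `1 - s`
on vectors `[x; -x]`. Finally `[A₀; 0] = P [Uᵀ A₀; 0]`.
-/

open Matrix

namespace Matrix

variable {m n 𝕜 : Type*} [Fintype m] [Fintype n] [DecidableEq m] [DecidableEq n]

theorem fromBlocks_one_self_one_pow [Field 𝕜] [NeZero (2 : 𝕜)] (s : Matrix n n 𝕜) (t : ℕ) :
    fromBlocks 1 s s 1 ^ t =
      (1 / 2 : 𝕜) • fromBlocks ((1 + s) ^ t + (1 - s) ^ t) ((1 + s) ^ t - (1 - s) ^ t)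
        ((1 + s) ^ t - (1 - s) ^ t) ((1 + s) ^ t + (1 - s) ^ t) := by
  induction t with
  | zero =>
    rw [pow_zero, pow_zero, pow_zero, sub_self, fromBlocks_smul, smul_zero,
      ← two_smul 𝕜 (1 : Matrix n n 𝕜), smul_smul, one_div, inv_mul_cancel₀ two_ne_zero, one_smul,
      fromBlocks_one]
  | succ t ih =>
    rw [pow_succ', ih, Matrix.mul_smul, fromBlocks_multiply, pow_succ', pow_succ']
    congr 1
    simp only [Matrix.one_mul, add_mul, sub_mul, mul_add, mul_sub]
    congr 1 <;> abel

theorem semiconjBy_fromBlocks_diag [CommRing 𝕜] {U : Matrix m m 𝕜} {V : Matrix n n 𝕜}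
    (hU : Uᵀ * U = 1) (hV : Vᵀ * V = 1) (s : Matrix m n 𝕜) :
    SemiconjBy (fromBlocks U 0 0 V) (fromBlocks 1 s sᵀ 1)
      (fromBlocks 1 (U * s * Vᵀ) (U * s * Vᵀ)ᵀ 1) := by
  simp only [SemiconjBy, fromBlocks_multiply, transpose_mul, transpose_transpose,
    Matrix.mul_assoc, hU, hV, Matrix.mul_one, Matrix.one_mul, Matrix.mul_zero, Matrix.zero_mul,
    add_zero, zero_add]

end Matrix

theorem linear_dynamics_closed_form_general {d r : ℕ}
    (G U S V : Matrix (Fin d) (Fin d) ℝ) (η : ℝ)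
    (hU : U * Uᵀ = 1) (hU' : Uᵀ * U = 1)
    (hV' : Vᵀ * V = 1)
    (hSdiag : ∀ i j, i ≠ j → S i j = 0)
    (hG : G = U * S * Vᵀ)
    (A0 : Matrix (Fin d) (Fin r) ℝ) (t : ℕ) :
    letI H : Matrix (Fin d ⊕ Fin d) (Fin d ⊕ Fin d) ℝ :=
      Matrix.fromBlocks 1 (η • G) (η • Gᵀ) 1
    letI Z : Matrix (Fin d ⊕ Fin d) (Fin r) ℝ := H ^ t * Matrix.fromRows A0 0
    (Z.submatrix Sum.inl id =
      (1 / 2 : ℝ) • (U * ((1 + η • S) ^ t + (1 - η • S) ^ t) * Uᵀ * A0)) ∧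
    (Z.submatrix Sum.inr id =
      (1 / 2 : ℝ) • (V * ((1 + η • S) ^ t - (1 - η • S) ^ t) * Uᵀ * A0)) := by
  set s := η • S
  have hs : sᵀ = s := (IsDiag.smul η hSdiag).isSymm
  have hH : fromBlocks 1 (η • G) (η • Gᵀ) 1 = fromBlocks 1 (U * s * Vᵀ) (U * s * Vᵀ)ᵀ 1 := by
    simp only [hG, s, ← transpose_smul, Matrix.mul_smul, Matrix.smul_mul]
  have hconj := (semiconjBy_fromBlocks_diag hU' hV' s).pow_right t
  rw [hs, fromBlocks_one_self_one_pow] at hconj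
  have hA0 : fromRows A0 (0 : Matrix (Fin d) (Fin r) ℝ) =
      fromBlocks U 0 0 V * fromRows (Uᵀ * A0) (0 : Matrix (Fin d) (Fin r) ℝ) := by
    rw [fromBlocks_mul_fromRows, ← Matrix.mul_assoc, hU]
    simp
  -- the ascription keeps `*` from elaborating through the `CStarMatrix` instance
  have hZ : fromBlocks 1 (η • G) (η • Gᵀ) 1 ^ t * fromRows A0 (0 : Matrix (Fin d) (Fin r) ℝ) =
      fromRows ((1 / 2 : ℝ) • (U * ((1 + s) ^ t + (1 - s) ^ t) * Uᵀ * A0))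
        ((1 / 2 : ℝ) • (V * ((1 + s) ^ t - (1 - s) ^ t) * Uᵀ * A0)) := by
    rw [hH, hA0, ← Matrix.mul_assoc, ← hconj.eq]
    ext (i | i) j <;> simp [fromBlocks_mul_fromRows, Matrix.mul_assoc]
  exact ⟨congrArg toRows₁ hZ, congrArg toRows₂ hZ⟩

/-- Closed form of the linear (power-method) dynamics of the stacked LoRA iterate. -/
theorem linear_dynamics_closed_form {d r : ℕ}
    (G U S V : Matrix (Fin d) (Fin d) ℝ) (η : ℝ) (hη : 0 < η)
    (hU : U * Uᵀ = 1) (hU' : Uᵀ * U = 1)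
    (hV : V * Vᵀ = 1) (hV' : Vᵀ * V = 1)
    (hSdiag : ∀ i j, i ≠ j → S i j = 0) (hSnn : ∀ i, 0 ≤ S i i)
    (hG : G = U * S * Vᵀ)
    (A0 : Matrix (Fin d) (Fin r) ℝ) (t : ℕ) :
    letI H : Matrix (Fin d ⊕ Fin d) (Fin d ⊕ Fin d) ℝ :=
      Matrix.fromBlocks 1 (η • G) (η • Gᵀ) 1
    letI Z : Matrix (Fin d ⊕ Fin d) (Fin r) ℝ := H ^ t * Matrix.fromRows A0 0
    (Z.submatrix Sum.inl id =
      (1 / 2 : ℝ) • (U * ((1 + η • S) ^ t + (1 - η • S) ^ t) * Uᵀ * A0)) ∧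
    (Z.submatrix Sum.inr id =
      (1 / 2 : ℝ) • (V * ((1 + η • S) ^ t - (1 - η • S) ^ t) * Uᵀ * A0)) :=
  linear_dynamics_closed_form_general G U S V η hU hU' hV' hSdiag hG A0 t
end

section
/- Let Δ ∈ ℝ^{d×k} have rank r* with smallest nonzero singular value λ*_{r*} and largest singular value λ*_1, and let Σ ∈ ℝ^{d×d} satisfy ‖Σ − I_d‖_op ≤ ε with ε ≤ 1/(2κ), where κ = λ*_1/λ*_{r*}. Let G = ΣΔ and suppose r ≥ r*. Define A_0 = [U_G]_{:,1:r}[S_G^{1/2}]_{1:r} and B_0 = [S_G^{1/2}]_{1:r}[V_G]_{:,1:r}ᵀ from the SVD G = U_G S_G V_Gᵀ. Then ‖A_0 B_0 − Δ‖_op ≤ ε‖Δ‖_op ≤ λ*_{r*}/2, and moreover the r*-th singular values satisfy σ_{r*}(A_0) ≥ √(λ*_{r*})/2 and σ_{r*}(B_0) ≥ √(λ*_{r*})/2. -/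
open Matrix

/-- Operator (spectral) norm of a real matrix. -/
noncomputable def opNorm {m n : Type*} [Fintype m] [Fintype n] [DecidableEq n]
    (M : Matrix m n ℝ) : ℝ :=
  ‖LinearMap.toContinuousLinearMap (Matrix.toEuclideanLin M)‖

/-- The `i`-th largest singular value, via the Eckart–Young characterization:
`σ_i(M) = inf { ‖M - N‖_op : rank N < i }`. -/
noncomputable def sval {m n : Type*} [Fintype m] [Fintype n] [DecidableEq n]
    (i : ℕ) (M : Matrix m n ℝ) : ℝ :=
  sInf {x : ℝ | ∃ N : Matrix m n ℝ, N.rank < i ∧ x = opNorm (M - N)}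

section Helpers

open scoped Matrix.Norms.L2Operator

variable {m n l : Type*} [Fintype m] [Fintype n] [Fintype l]
  [DecidableEq m] [DecidableEq n] [DecidableEq l]

lemma opNorm_eq_norm (M : Matrix m n ℝ) : opNorm M = ‖M‖ := rfl

lemma opNorm_nonneg (M : Matrix m n ℝ) : 0 ≤ opNorm M := by
  rw [opNorm_eq_norm]; exact norm_nonneg _

lemma opNorm_mul_le (A : Matrix m n ℝ) (B : Matrix n l ℝ) :
    opNorm (A * B) ≤ opNorm A * opNorm B := by
  simpa only [opNorm_eq_norm] using Matrix.l2_opNorm_mul A B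

lemma opNorm_neg (M : Matrix m n ℝ) : opNorm (-M) = opNorm M := by
  rw [opNorm_eq_norm, opNorm_eq_norm]
  exact norm_neg M

lemma opNorm_transpose (M : Matrix m n ℝ) : opNorm Mᵀ = opNorm M := by
  simp only [opNorm_eq_norm]
  rw [← Matrix.conjTranspose_eq_transpose_of_trivial]
  exact Matrix.l2_opNorm_conjTranspose M

lemma norm_mulVec_le (M : Matrix m n ℝ) (x : EuclideanSpace ℝ n) :
    ‖(EuclideanSpace.equiv m ℝ).symm (M *ᵥ x)‖ ≤ opNorm M * ‖x‖ := by
  simpa only [opNorm_eq_norm] using Matrix.l2_opNorm_mulVec M x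

lemma opNorm_le_bound (M : Matrix m n ℝ) (c : ℝ) (hc : 0 ≤ c)
    (h : ∀ x : EuclideanSpace ℝ n, ‖(EuclideanSpace.equiv m ℝ).symm (M *ᵥ x)‖ ≤ c * ‖x‖) :
    opNorm M ≤ c :=
  ContinuousLinearMap.opNorm_le_bound _ hc h

lemma sval_le {i : ℕ} (M N : Matrix m n ℝ) (h : N.rank < i) :
    sval i M ≤ opNorm (M - N) := by
  apply csInf_le
  · exact ⟨0, by rintro x ⟨N', -, rfl⟩; exact opNorm_nonneg _⟩
  · exact ⟨N, h, rfl⟩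

lemma le_sval {i : ℕ} (hi : 0 < i) (M : Matrix m n ℝ) (c : ℝ)
    (h : ∀ N : Matrix m n ℝ, N.rank < i → c ≤ opNorm (M - N)) : c ≤ sval i M := by
  apply le_csInf
  · exact ⟨opNorm (M - 0), 0, by simpa using hi, rfl⟩
  · rintro x ⟨N, hN, rfl⟩; exact h N hN

lemma sval_le_sval_add (i : ℕ) (hi : 0 < i) (M M' : Matrix m n ℝ) :
    sval i M ≤ sval i M' + opNorm (M - M') := by
  have h : sval i M - opNorm (M - M') ≤ sval i M' := by
    apply le_sval hi
    intro N hN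
    have h1 : sval i M ≤ opNorm (M - N) := sval_le M N hN
    have h2 : opNorm (M - N) ≤ opNorm (M' - N) + opNorm (M - M') := by
      have : M - N = (M' - N) + (M - M') := by abel
      rw [this, opNorm_eq_norm, opNorm_eq_norm, opNorm_eq_norm]
      exact norm_add_le _ _
    linarith
  linarith

lemma sval_nonneg (i : ℕ) (hi : 0 < i) (M : Matrix m n ℝ) : 0 ≤ sval i M :=
  le_sval hi M 0 fun N _ => opNorm_nonneg _

end Helpers
set_option maxHeartbeats 800000

-- sum over Fin d of a "partial" function supported on indices < k
lemma sum_dite_le {d k : ℕ} (g : Fin k → ℝ) (hg : ∀ j, 0 ≤ g j) :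
    (∑ i : Fin d, if h : (i : ℕ) < k then g ⟨i, h⟩ else 0) ≤ ∑ j : Fin k, g j := by
  set f : ℕ → ℝ := fun i => if h : i < k then g ⟨i, h⟩ else 0 with hf
  have hL : (∑ i : Fin d, if h : (i : ℕ) < k then g ⟨i, h⟩ else 0) = ∑ i ∈ Finset.range d, f i := by
    rw [Finset.sum_range fun i => f i]
  have hR : (∑ j : Fin k, g j) = ∑ i ∈ Finset.range k, f i := by
    rw [Finset.sum_range fun i => f i]
    apply Finset.sum_congr rfl
    intro j _
    simp [hf, j.isLt]
  rw [hL, hR]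
  have h1 : (∑ i ∈ Finset.range d, f i) = ∑ i ∈ Finset.range (min d k), f i := by
    refine (Finset.sum_subset (by gcongr; omega) ?_).symm
    intro x hx hx2
    simp only [Finset.mem_range] at hx hx2
    have : ¬ x < k := by omega
    simp [hf, this]
  rw [h1]
  refine Finset.sum_le_sum_of_subset_of_nonneg (by gcongr; omega) ?_
  intro i _ _
  by_cases h : i < k <;> simp [hf, h, hg]

-- entry of mulVec for a diagonal-like rectangular matrix
lemma mulVec_diagLike {d k : ℕ} (M : Matrix (Fin d) (Fin k) ℝ)
    (h0 : ∀ (i : Fin d) (j : Fin k), (i : ℕ) ≠ (j : ℕ) → M i j = 0)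
    (x : Fin k → ℝ) (i : Fin d) :
    (M *ᵥ x) i = if h : (i : ℕ) < k then M i ⟨i, h⟩ * x ⟨i, h⟩ else 0 := by
  rw [Matrix.mulVec, dotProduct]
  by_cases h : (i : ℕ) < k
  · rw [dif_pos h]
    refine Finset.sum_eq_single_of_mem (⟨(i : ℕ), h⟩ : Fin k) (Finset.mem_univ _)
      (fun j _ hj => ?_)
    have : (i : ℕ) ≠ (j : ℕ) := by
      intro hc; apply hj; ext; simp [← hc]
    rw [h0 i j this, zero_mul]
  · rw [dif_neg h]
    apply Finset.sum_eq_zero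
    intro j _
    have : (i : ℕ) ≠ (j : ℕ) := by omega
    rw [h0 i j this, zero_mul]

lemma euc_norm_eq {ι : Type*} [Fintype ι] (v : ι → ℝ) :
    ‖(EuclideanSpace.equiv ι ℝ).symm v‖ = Real.sqrt (∑ i, v i ^ 2) := by
  rw [EuclideanSpace.norm_eq]
  congr 1
  refine Finset.sum_congr rfl fun i _ => ?_
  simp [Real.norm_eq_abs, sq_abs]

lemma sum_sq_mulVec {m' n' : Type*} [Fintype m'] [Fintype n'] [DecidableEq n']
    (M : Matrix m' n' ℝ) (w : n' → ℝ) (hMM : Mᵀ * M = Matrix.diagonal w) (y : n' → ℝ) :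
    ∑ i, ((M *ᵥ y) i) ^ 2 = ∑ c, w c * y c ^ 2 := by
  have key : (M *ᵥ y) ⬝ᵥ (M *ᵥ y) = y ⬝ᵥ ((Mᵀ * M) *ᵥ y) := by
    rw [← Matrix.mulVec_mulVec, Matrix.dotProduct_mulVec y Mᵀ, Matrix.vecMul_transpose]
  rw [hMM] at key
  have h1 : (M *ᵥ y) ⬝ᵥ (M *ᵥ y) = ∑ i, ((M *ᵥ y) i) ^ 2 := by
    simp [dotProduct, sq]
  have h2 : y ⬝ᵥ (Matrix.diagonal w *ᵥ y) = ∑ c, w c * y c ^ 2 := by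
    simp [dotProduct, Matrix.mulVec_diagonal]
    refine Finset.sum_congr rfl fun c _ => by ring
  rw [← h1, key, h2]

section Helpers2
open scoped Matrix.Norms.L2Operator

lemma opNorm_le_of_diagLike {d k : ℕ} (M : Matrix (Fin d) (Fin k) ℝ) (c : ℝ) (hc : 0 ≤ c)
    (h0 : ∀ (i : Fin d) (j : Fin k), (i : ℕ) ≠ (j : ℕ) → M i j = 0)
    (hb : ∀ (i : Fin d) (j : Fin k), (i : ℕ) = (j : ℕ) → |M i j| ≤ c) :
    opNorm M ≤ c := by
  apply opNorm_le_bound M c hc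
  intro x
  rw [euc_norm_eq]
  have hx : ‖x‖ = Real.sqrt (∑ j, x j ^ 2) := by
    rw [show x = (EuclideanSpace.equiv (Fin k) ℝ).symm ((EuclideanSpace.equiv (Fin k) ℝ) x) by simp]
    rw [euc_norm_eq]
    rfl
  rw [hx]
  have key : (∑ i, ((M *ᵥ x) i) ^ 2) ≤ c ^ 2 * ∑ j, x j ^ 2 := by
    have step1 : ∀ i : Fin d, ((M *ᵥ x) i) ^ 2 ≤
        (if h : (i : ℕ) < k then c ^ 2 * x ⟨i, h⟩ ^ 2 else 0) := by
      intro i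
      rw [mulVec_diagLike M h0]
      by_cases h : (i : ℕ) < k
      · rw [dif_pos h, dif_pos h, mul_pow]
        have : (M i ⟨i, h⟩) ^ 2 ≤ c ^ 2 := by
          rw [← sq_abs]
          exact pow_le_pow_left₀ (abs_nonneg _) (hb i ⟨i, h⟩ rfl) 2
        exact mul_le_mul_of_nonneg_right this (sq_nonneg _)
      · rw [dif_neg h, dif_neg h]
        simp
    calc (∑ i, ((M *ᵥ x) i) ^ 2)
        ≤ ∑ i : Fin d, (if h : (i : ℕ) < k then c ^ 2 * x ⟨i, h⟩ ^ 2 else 0) :=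
          Finset.sum_le_sum fun i _ => step1 i
      _ ≤ ∑ j : Fin k, c ^ 2 * x j ^ 2 :=
          sum_dite_le _ (fun j => mul_nonneg (sq_nonneg c) (sq_nonneg _))
      _ = c ^ 2 * ∑ j, x j ^ 2 := by rw [Finset.mul_sum]
  calc Real.sqrt (∑ i, ((M *ᵥ x) i) ^ 2) ≤ Real.sqrt (c ^ 2 * ∑ j, x j ^ 2) :=
        Real.sqrt_le_sqrt key
    _ = c * Real.sqrt (∑ j, x j ^ 2) := by
        rw [Real.sqrt_mul (sq_nonneg c), Real.sqrt_sq hc]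

end Helpers2

lemma sum_dite_eq_of_le {d k : ℕ} (hkd : k ≤ d) (g : Fin k → ℝ) :
    (∑ i : Fin d, if h : (i : ℕ) < k then g ⟨i, h⟩ else 0) = ∑ j : Fin k, g j := by
  set f : ℕ → ℝ := fun i => if h : i < k then g ⟨i, h⟩ else 0 with hf
  have hL : (∑ i : Fin d, if h : (i : ℕ) < k then g ⟨i, h⟩ else 0)
      = ∑ i ∈ Finset.range d, f i := by
    rw [Finset.sum_range fun i => f i]
  have hR : (∑ j : Fin k, g j) = ∑ i ∈ Finset.range k, f i := by
    rw [Finset.sum_range fun i => f i]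
    exact Finset.sum_congr rfl fun j _ => by simp [hf, j.isLt]
  rw [hL, hR]
  refine (Finset.sum_subset (by gcongr) ?_).symm
  intro x hx hx2
  simp only [Finset.mem_range] at hx hx2
  simp [hf, hx2]

section Helpers3
open scoped Matrix.Norms.L2Operator

lemma le_sval_of_gram {m' r rs : ℕ} (hrs0 : 0 < rs) (hrsr : rs ≤ r)
    (M : Matrix (Fin m') (Fin r) ℝ) (w : Fin r → ℝ)
    (hMM : Mᵀ * M = Matrix.diagonal w) (c : ℝ) (hc : 0 ≤ c)
    (hcw : ∀ j : Fin r, (j : ℕ) < rs → c ≤ w j) :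
    Real.sqrt c ≤ sval rs M := by
  apply le_sval hrs0
  intro N hN
  -- embedding matrix P : r × rs
  set P : Matrix (Fin r) (Fin rs) ℝ :=
    Matrix.of (fun i j => if (i : ℕ) = (j : ℕ) then (1 : ℝ) else 0) with hP
  have hP0 : ∀ (i : Fin r) (j : Fin rs), (i : ℕ) ≠ (j : ℕ) → P i j = 0 := by
    intro i j hij; simp [hP, hij]
  -- N * P has rank < rs, so it has nontrivial kernel
  have hrankNP : (N * P).rank < rs := lt_of_le_of_lt (Matrix.rank_mul_le_left N P) hN
  obtain ⟨x, hxker, hxne⟩ : ∃ x : Fin rs → ℝ, (N * P) *ᵥ x = 0 ∧ x ≠ 0 := by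
    have hrk := (N * P).mulVecLin.finrank_range_add_finrank_ker
    have hdom : Module.finrank ℝ (Fin rs → ℝ) = rs := by simp
    rw [hdom] at hrk
    have hker : LinearMap.ker (N * P).mulVecLin ≠ ⊥ := by
      intro hbot
      rw [hbot, finrank_bot] at hrk
      rw [Matrix.rank] at hrankNP
      omega
    obtain ⟨x, hx, hxne⟩ := Submodule.exists_mem_ne_zero_of_ne_bot hker
    exact ⟨x, by simpa [Matrix.mulVecLin_apply] using hx, hxne⟩
  set y : Fin r → ℝ := P *ᵥ x with hy
  have hyj : ∀ j : Fin r, y j = if h : (j : ℕ) < rs then x ⟨j, h⟩ else 0 := by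
    intro j
    rw [hy, mulVec_diagLike P hP0 x j]
    by_cases h : (j : ℕ) < rs
    · rw [dif_pos h, dif_pos h]; simp [hP]
    · rw [dif_neg h, dif_neg h]
  have hNy : N *ᵥ y = 0 := by
    rw [hy, Matrix.mulVec_mulVec, hxker]
  -- the key sum
  set S : ℝ := ∑ j : Fin rs, x j ^ 2 with hS
  have hSpos : 0 < S := by
    have hnn : ∀ j : Fin rs, 0 ≤ x j ^ 2 := fun j => sq_nonneg _
    obtain ⟨j, hj⟩ : ∃ j, x j ≠ 0 := Function.ne_iff.mp hxne
    exact Finset.sum_pos' (fun j _ => hnn j) ⟨j, Finset.mem_univ j, by positivity⟩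
  have hysum : (∑ j : Fin r, y j ^ 2) = S := by
    rw [hS]
    rw [show (∑ j : Fin r, y j ^ 2)
      = ∑ j : Fin r, (if h : (j : ℕ) < rs then x ⟨j, h⟩ ^ 2 else 0) from
      Finset.sum_congr rfl fun j _ => by rw [hyj j]; split <;> simp]
    exact sum_dite_eq_of_le hrsr (fun j => x j ^ 2)
  have hMy : (∑ i : Fin m', ((M *ᵥ y) i) ^ 2) ≥ c * S := by
    rw [sum_sq_mulVec M w hMM y]
    have : ∀ j : Fin r, w j * y j ^ 2 ≥ (if h : (j : ℕ) < rs then c * x ⟨j, h⟩ ^ 2 else 0) := by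
      intro j
      rw [hyj j]
      by_cases h : (j : ℕ) < rs
      · rw [dif_pos h, dif_pos h]
        exact mul_le_mul_of_nonneg_right (hcw j h) (sq_nonneg _)
      · rw [dif_neg h, dif_neg h]; simp
    calc (∑ j : Fin r, w j * y j ^ 2)
        ≥ ∑ j : Fin r, (if h : (j : ℕ) < rs then c * x ⟨j, h⟩ ^ 2 else 0) :=
          Finset.sum_le_sum fun j _ => this j
      _ = ∑ j : Fin rs, c * x j ^ 2 := sum_dite_eq_of_le hrsr (fun j => c * x j ^ 2)
      _ = c * S := by rw [hS, Finset.mul_sum]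
  -- now the norm estimate
  have hnorm := norm_mulVec_le (M - N) ((EuclideanSpace.equiv (Fin r) ℝ).symm y)
  have hyfun : (((EuclideanSpace.equiv (Fin r) ℝ).symm y : EuclideanSpace ℝ (Fin r)) : Fin r → ℝ)
      = y := rfl
  rw [euc_norm_eq, euc_norm_eq] at hnorm
  have hMNy : (M - N) *ᵥ y = M *ᵥ y := by
    rw [Matrix.sub_mulVec, hNy, sub_zero]
  rw [show ((M - N) *ᵥ ((EuclideanSpace.equiv (Fin r) ℝ).symm y : EuclideanSpace ℝ (Fin r)))
      = M *ᵥ y from by rw [hyfun]; exact hMNy] at hnorm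
  rw [hysum] at hnorm
  have h1 : Real.sqrt (c * S) ≤ Real.sqrt (∑ i, ((M *ᵥ y) i) ^ 2) := Real.sqrt_le_sqrt hMy
  have h2 : Real.sqrt (c * S) = Real.sqrt c * Real.sqrt S := Real.sqrt_mul hc S
  have hsqrtS : 0 < Real.sqrt S := Real.sqrt_pos.mpr hSpos
  nlinarith [Real.sqrt_nonneg c, Real.sqrt_nonneg S, opNorm_nonneg (M - N)]

end Helpers3

section Helpers4
open scoped Matrix.Norms.L2Operator

lemma opNorm_transpose_mul_self {p q : Type*} [Fintype p] [Fintype q] [DecidableEq p]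
    [DecidableEq q] (Y : Matrix p q ℝ) : opNorm (Yᵀ * Y) = opNorm Y * opNorm Y := by
  simp only [opNorm_eq_norm]
  rw [← Matrix.conjTranspose_eq_transpose_of_trivial]
  exact Matrix.l2_opNorm_conjTranspose_mul_self Y

lemma opNorm_orth_mul {p q : Type*} [Fintype p] [Fintype q] [DecidableEq p] [DecidableEq q]
    (U : Matrix p p ℝ) (hU : Uᵀ * U = 1) (Y : Matrix p q ℝ) :
    opNorm (U * Y) = opNorm Y := by
  have h1 : opNorm ((U * Y)ᵀ * (U * Y)) = opNorm (U * Y) * opNorm (U * Y) :=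
    opNorm_transpose_mul_self (U * Y)
  have h2 : (U * Y)ᵀ * (U * Y) = Yᵀ * Y := by
    rw [Matrix.transpose_mul]
    rw [Matrix.mul_assoc, ← Matrix.mul_assoc Uᵀ U Y, hU, Matrix.one_mul]
  rw [h2, opNorm_transpose_mul_self] at h1
  calc opNorm (U * Y) = Real.sqrt (opNorm (U * Y) * opNorm (U * Y)) :=
        (Real.sqrt_mul_self (opNorm_nonneg _)).symm
    _ = Real.sqrt (opNorm Y * opNorm Y) := by rw [h1]
    _ = opNorm Y := Real.sqrt_mul_self (opNorm_nonneg _)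

lemma opNorm_mul_orth {p q : Type*} [Fintype p] [Fintype q] [DecidableEq p] [DecidableEq q]
    (V : Matrix q q ℝ) (hV : Vᵀ * V = 1) (Y : Matrix p q ℝ) :
    opNorm (Y * Vᵀ) = opNorm Y := by
  rw [← opNorm_transpose (Y * Vᵀ), Matrix.transpose_mul, Matrix.transpose_transpose,
    opNorm_orth_mul V hV Yᵀ, opNorm_transpose]

lemma sval_transpose_le {m n : Type*} [Fintype m] [Fintype n] [DecidableEq m] [DecidableEq n]
    {i : ℕ} (hi : 0 < i) (M : Matrix m n ℝ) : sval i Mᵀ ≤ sval i M := by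
  apply le_sval hi
  intro N hN
  have h1 : (Nᵀ).rank < i := by rwa [Matrix.rank_transpose]
  have h2 : sval i Mᵀ ≤ opNorm (Mᵀ - Nᵀ) := sval_le _ _ h1
  rwa [← Matrix.transpose_sub, opNorm_transpose] at h2

lemma sval_transpose {m n : Type*} [Fintype m] [Fintype n] [DecidableEq m] [DecidableEq n]
    {i : ℕ} (hi : 0 < i) (M : Matrix m n ℝ) : sval i Mᵀ = sval i M := by
  refine le_antisymm (sval_transpose_le hi M) ?_
  have := sval_transpose_le hi Mᵀ
  rwa [Matrix.transpose_transpose] at this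

end Helpers4

section Structural

lemma SG_zero_beyond_rank {d k rs : ℕ}
    (UG : Matrix (Fin d) (Fin d) ℝ) (SG : Matrix (Fin d) (Fin k) ℝ)
    (VG : Matrix (Fin k) (Fin k) ℝ)
    (hUG' : UGᵀ * UG = 1) (hVG' : VGᵀ * VG = 1)
    (hSGdiag : ∀ (i : Fin d) (j : Fin k), (i : ℕ) ≠ (j : ℕ) → SG i j = 0)
    (hSGnn : ∀ i j, 0 ≤ SG i j)
    (hSGanti : ∀ (i j : Fin d) (i' j' : Fin k), (i : ℕ) = (i' : ℕ) → (j : ℕ) = (j' : ℕ) →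
      (i : ℕ) ≤ (j : ℕ) → SG j j' ≤ SG i i')
    (hrankG : (UG * SG * VGᵀ).rank ≤ rs) :
    ∀ (i : Fin d) (j : Fin k), (i : ℕ) = (j : ℕ) → rs ≤ (i : ℕ) → SG i j = 0 := by
  intro i j hij hrsi
  by_contra hne
  have hpos : 0 < SG i j := lt_of_le_of_ne (hSGnn i j) (Ne.symm hne)
  have hid : (i : ℕ) < d := i.isLt
  have hjk : (j : ℕ) < k := j.isLt
  have hrs1d : rs + 1 ≤ d := by omega
  have hrs1k : rs + 1 ≤ k := by omega
  set f : Fin (rs + 1) → Fin d := fun a => ⟨(a : ℕ), by omega⟩ with hf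
  set g : Fin (rs + 1) → Fin k := fun a => ⟨(a : ℕ), by omega⟩ with hg
  set v : Fin (rs + 1) → ℝ := fun a => SG (f a) (g a) with hv
  have hvpos : ∀ a, 0 < v a := by
    intro a
    have ha : (a : ℕ) ≤ (i : ℕ) := by
      have := a.isLt; omega
    have h1 : SG i j ≤ SG (f a) (g a) := hSGanti (f a) i (g a) j rfl hij ha
    exact lt_of_lt_of_le hpos h1
  set F : Matrix (Fin (rs + 1)) (Fin d) ℝ := Matrix.of (fun a i' => if f a = i' then 1 else 0)
    with hF
  set Gm : Matrix (Fin k) (Fin (rs + 1)) ℝ := Matrix.of (fun j' a => if g a = j' then 1 else 0)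
    with hGm
  have hFS : ∀ (a : Fin (rs + 1)) (j' : Fin k), (F * SG) a j' = SG (f a) j' := by
    intro a j'
    rw [Matrix.mul_apply]
    have h1 : (∑ i', F a i' * SG i' j') = F a (f a) * SG (f a) j' :=
      Finset.sum_eq_single_of_mem (f a) (Finset.mem_univ _)
        (fun i' _ hi' => by simp [hF, Ne.symm hi'])
    rw [h1]
    simp [hF]
  have hFSG : F * SG * Gm = Matrix.diagonal v := by
    ext a b
    rw [Matrix.mul_apply]
    have : ∀ j' : Fin k, (F * SG) a j' * Gm j' b = (if g b = j' then SG (f a) j' else 0) := by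
      intro j'
      rw [hFS]
      by_cases h : g b = j' <;> simp [hGm, h]
    rw [Finset.sum_congr rfl fun j' _ => this j']
    rw [Finset.sum_ite_eq Finset.univ (g b) (fun j' => SG (f a) j')]
    simp only [Finset.mem_univ, if_true]
    by_cases hab : a = b
    · subst hab; simp [Matrix.diagonal, hv]
    · have : ((f a : Fin d) : ℕ) ≠ ((g b : Fin k) : ℕ) := by
        simp only [hf, hg]
        exact fun hc => hab (Fin.ext hc)
      rw [hSGdiag (f a) (g b) this, Matrix.diagonal_apply_ne _ hab]
  have hrankdiag : (Matrix.diagonal v).rank = rs + 1 := by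
    rw [Matrix.rank_diagonal]
    rw [Fintype.card_congr (Equiv.subtypeUnivEquiv (fun a => (hvpos a).ne'))]
    simp
  have hSGeq : UGᵀ * (UG * SG * VGᵀ) * VG = SG := by
    rw [Matrix.mul_assoc UG SG VGᵀ, ← Matrix.mul_assoc UGᵀ UG (SG * VGᵀ), hUG', Matrix.one_mul,
      Matrix.mul_assoc SG VGᵀ VG, hVG', Matrix.mul_one]
  have h1 : rs + 1 ≤ SG.rank := by
    rw [← hrankdiag, ← hFSG]
    exact le_trans (Matrix.rank_mul_le_left (F * SG) Gm)
      (Matrix.rank_mul_le_right F SG)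
  have h2 : SG.rank ≤ (UG * SG * VGᵀ).rank := by
    conv_lhs => rw [← hSGeq]
    exact le_trans (Matrix.rank_mul_le_left (UGᵀ * (UG * SG * VGᵀ)) VG)
      (Matrix.rank_mul_le_right UGᵀ (UG * SG * VGᵀ))
  omega

end Structural

lemma trunc_prod_eq {d k r : ℕ} (hrd : r ≤ d) (hrk : r ≤ k)
    (UG : Matrix (Fin d) (Fin d) ℝ) (SG : Matrix (Fin d) (Fin k) ℝ)
    (VG : Matrix (Fin k) (Fin k) ℝ)
    (hSGdiag : ∀ (i : Fin d) (j : Fin k), (i : ℕ) ≠ (j : ℕ) → SG i j = 0)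
    (hSGnn : ∀ i j, 0 ≤ SG i j)
    (hSGzero : ∀ (i : Fin d) (j : Fin k), (i : ℕ) = (j : ℕ) → r ≤ (i : ℕ) → SG i j = 0) :
    (UG.submatrix id (Fin.castLE hrd) *
        Matrix.diagonal (fun c => Real.sqrt (SG (Fin.castLE hrd c) (Fin.castLE hrk c)))) *
      (Matrix.diagonal (fun c => Real.sqrt (SG (Fin.castLE hrd c) (Fin.castLE hrk c))) *
        (VG.submatrix id (Fin.castLE hrk))ᵀ) = UG * SG * VGᵀ := by
  set w : Fin r → ℝ := fun c => SG (Fin.castLE hrd c) (Fin.castLE hrk c) with hw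
  set sq : Matrix (Fin r) (Fin r) ℝ := Matrix.diagonal (fun c => Real.sqrt (w c)) with hsq
  set Ur : Matrix (Fin d) (Fin r) ℝ := UG.submatrix id (Fin.castLE hrd) with hUr
  set Vr : Matrix (Fin k) (Fin r) ℝ := VG.submatrix id (Fin.castLE hrk) with hVr
  have hsqsq : sq * sq = Matrix.diagonal w := by
    have hww : (fun c => Real.sqrt (w c) * Real.sqrt (w c)) = w :=
      funext fun c => Real.mul_self_sqrt (hSGnn _ _)
    rw [hsq, Matrix.diagonal_mul_diagonal, hww]
  have hassoc : (Ur * sq) * (sq * Vrᵀ) = Ur * Matrix.diagonal w * Vrᵀ := by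
    rw [Matrix.mul_assoc Ur sq (sq * Vrᵀ), ← Matrix.mul_assoc sq sq Vrᵀ, hsqsq,
      Matrix.mul_assoc]
  rw [hassoc]
  ext a b
  -- LHS entry
  have hL : (Ur * Matrix.diagonal w * Vrᵀ) a b
      = ∑ c : Fin r, UG a (Fin.castLE hrd c) * w c * VG b (Fin.castLE hrk c) := by
    rw [Matrix.mul_apply]
    refine Finset.sum_congr rfl fun c _ => ?_
    rw [Matrix.mul_diagonal]
    simp [hUr, hVr]
  -- RHS entry
  have hUGSG : ∀ j : Fin k, (UG * SG) a j
      = if h : (j : ℕ) < d then UG a ⟨(j : ℕ), h⟩ * SG ⟨(j : ℕ), h⟩ j else 0 := by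
    intro j
    rw [Matrix.mul_apply]
    by_cases h : (j : ℕ) < d
    · rw [dif_pos h]
      refine Finset.sum_eq_single_of_mem (⟨(j : ℕ), h⟩ : Fin d) (Finset.mem_univ _)
        (fun i _ hi => ?_)
      have : (i : ℕ) ≠ (j : ℕ) := fun hc => hi (by ext; simpa using hc)
      rw [hSGdiag i j this, mul_zero]
    · rw [dif_neg h]
      refine Finset.sum_eq_zero fun i _ => ?_
      have : (i : ℕ) ≠ (j : ℕ) := by have := i.isLt; omega
      rw [hSGdiag i j this, mul_zero]
  have hR : (UG * SG * VGᵀ) a b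
      = ∑ j : Fin k, (if h : (j : ℕ) < r then
          UG a (Fin.castLE hrd ⟨(j : ℕ), h⟩) * w ⟨(j : ℕ), h⟩ *
            VG b (Fin.castLE hrk ⟨(j : ℕ), h⟩) else 0) := by
    rw [Matrix.mul_apply]
    refine Finset.sum_congr rfl fun j _ => ?_
    rw [hUGSG j, Matrix.transpose_apply]
    by_cases hjr : (j : ℕ) < r
    · have hjd : (j : ℕ) < d := lt_of_lt_of_le hjr hrd
      rw [dif_pos hjd, dif_pos hjr]
      have h1 : Fin.castLE hrd (⟨(j : ℕ), hjr⟩ : Fin r) = ⟨(j : ℕ), hjd⟩ := rfl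
      have h2 : Fin.castLE hrk (⟨(j : ℕ), hjr⟩ : Fin r) = j := by ext; rfl
      simp only [hw]
      rw [h1, h2]
    · rw [dif_neg hjr]
      by_cases hjd : (j : ℕ) < d
      · rw [dif_pos hjd]
        rw [hSGzero ⟨(j : ℕ), hjd⟩ j rfl (le_of_not_gt hjr)]
        ring
      · rw [dif_neg hjd, zero_mul]
  rw [hL, hR]
  exact (sum_dite_eq_of_le hrk (fun c =>
    UG a (Fin.castLE hrd c) * w c * VG b (Fin.castLE hrk c))).symm

lemma submatrix_orth {d r : ℕ} (hrd : r ≤ d) (UG : Matrix (Fin d) (Fin d) ℝ)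
    (hUG' : UGᵀ * UG = 1) :
    (UG.submatrix id (Fin.castLE hrd))ᵀ * (UG.submatrix id (Fin.castLE hrd)) = 1 := by
  ext c c'
  rw [Matrix.mul_apply]
  have h1 : (∑ i, (UG.submatrix id (Fin.castLE hrd))ᵀ c i * UG.submatrix id (Fin.castLE hrd) i c')
      = (UGᵀ * UG) (Fin.castLE hrd c) (Fin.castLE hrd c') := by
    rw [Matrix.mul_apply]
    exact Finset.sum_congr rfl fun i _ => by simp
  rw [h1, hUG']
  rw [Matrix.one_apply, Matrix.one_apply]
  by_cases h : c = c'
  · rw [if_pos h, if_pos (by rw [h])]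
  · rw [if_neg h, if_neg (fun hc => h (Fin.castLE_injective hrd hc))]


/-- Under spectral initialization from the one-step full gradient `G = ΣΔ`,
`A₀B₀` is close to `Δ` and `A₀, B₀` have well-conditioned `r*`-th singular values. -/
theorem spectral_init_close_to_Delta {d k r rs : ℕ}
    (hrd : r ≤ d) (hrk : r ≤ k) (hrs : rs ≤ r)
    (Δ : Matrix (Fin d) (Fin k) ℝ) (hrank : Δ.rank = rs)
    (hlam : 0 < sval rs Δ)
    (Sig : Matrix (Fin d) (Fin d) ℝ) (ε : ℝ) (hε0 : 0 ≤ ε)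
    (hSig : opNorm (Sig - 1) ≤ ε)
    (hεκ : ε ≤ 1 / (2 * (opNorm Δ / sval rs Δ)))
    (UG : Matrix (Fin d) (Fin d) ℝ) (SG : Matrix (Fin d) (Fin k) ℝ)
    (VG : Matrix (Fin k) (Fin k) ℝ)
    (hUG : UG * UGᵀ = 1) (hUG' : UGᵀ * UG = 1)
    (hVG : VG * VGᵀ = 1) (hVG' : VGᵀ * VG = 1)
    (hSGdiag : ∀ (i : Fin d) (j : Fin k), (i : ℕ) ≠ (j : ℕ) → SG i j = 0)
    (hSGnn : ∀ i j, 0 ≤ SG i j)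
    (hSGanti : ∀ (i j : Fin d) (i' j' : Fin k), (i : ℕ) = (i' : ℕ) → (j : ℕ) = (j' : ℕ) →
      (i : ℕ) ≤ (j : ℕ) → SG j j' ≤ SG i i')
    (hGsvd : Sig * Δ = UG * SG * VGᵀ) :
    letI sqrtS : Matrix (Fin r) (Fin r) ℝ :=
      Matrix.diagonal fun j => Real.sqrt (SG (Fin.castLE hrd j) (Fin.castLE hrk j))
    letI A0 : Matrix (Fin d) (Fin r) ℝ := UG.submatrix id (Fin.castLE hrd) * sqrtS
    letI B0 : Matrix (Fin r) (Fin k) ℝ := sqrtS * (VG.submatrix id (Fin.castLE hrk))ᵀ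
    opNorm (A0 * B0 - Δ) ≤ ε * opNorm Δ ∧
    ε * opNorm Δ ≤ sval rs Δ / 2 ∧
    Real.sqrt (sval rs Δ) / 2 ≤ sval rs A0 ∧
    Real.sqrt (sval rs Δ) / 2 ≤ sval rs B0 := by
  set sqrtS : Matrix (Fin r) (Fin r) ℝ :=
    Matrix.diagonal fun j => Real.sqrt (SG (Fin.castLE hrd j) (Fin.castLE hrk j)) with hsqrtS
  set A0 : Matrix (Fin d) (Fin r) ℝ := UG.submatrix id (Fin.castLE hrd) * sqrtS with hA0
  set B0 : Matrix (Fin r) (Fin k) ℝ := sqrtS * (VG.submatrix id (Fin.castLE hrk))ᵀ with hB0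
  -- rs is positive
  have hrs0 : 0 < rs := by
    rcases Nat.eq_zero_or_pos rs with h0 | h
    · exfalso
      rw [h0] at hlam
      have hempty : {x : ℝ | ∃ N : Matrix (Fin d) (Fin k) ℝ, N.rank < 0 ∧ x = opNorm (Δ - N)}
          = ∅ := by ext x; simp
      rw [sval, hempty, Real.sInf_empty] at hlam
      exact lt_irrefl 0 hlam
    · exact h
  have hrsd : rs ≤ d := le_trans hrs hrd
  have hrsk : rs ≤ k := le_trans hrs hrk
  set lam := sval rs Δ with hlamdef
  have hlam_le : lam ≤ opNorm Δ := by
    have h := sval_le Δ 0 (by rw [Matrix.rank_zero]; exact hrs0)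
    simpa using h
  have hΔpos : 0 < opNorm Δ := lt_of_lt_of_le hlam hlam_le
  have hstep2 : ε * opNorm Δ ≤ lam / 2 := by
    have h := mul_le_mul_of_nonneg_right hεκ (le_of_lt hΔpos)
    have ha : opNorm Δ ≠ 0 := ne_of_gt hΔpos
    have hb : lam ≠ 0 := ne_of_gt hlam
    have heq : 1 / (2 * (opNorm Δ / lam)) * opNorm Δ = lam / 2 := by
      field_simp
    linarith
  -- SG vanishes beyond index rs
  have hrankG : (UG * SG * VGᵀ).rank ≤ rs := by
    rw [← hGsvd]
    calc (Sig * Δ).rank ≤ Δ.rank := Matrix.rank_mul_le_right Sig Δ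
      _ = rs := hrank
  have hSGzero : ∀ (i : Fin d) (j : Fin k), (i : ℕ) = (j : ℕ) → rs ≤ (i : ℕ) → SG i j = 0 :=
    SG_zero_beyond_rank UG SG VG hUG' hVG' hSGdiag hSGnn hSGanti hrankG
  have hSGzeroR : ∀ (i : Fin d) (j : Fin k), (i : ℕ) = (j : ℕ) → r ≤ (i : ℕ) → SG i j = 0 :=
    fun i j hij hri => hSGzero i j hij (le_trans hrs hri)
  -- A0 * B0 = Sig * Δ
  have hA0B0 : A0 * B0 = Sig * Δ := by
    rw [hGsvd]
    exact trunc_prod_eq hrd hrk UG SG VG hSGdiag hSGnn hSGzeroR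
  have hGmD : opNorm (Sig * Δ - Δ) ≤ ε * opNorm Δ := by
    have heq2 : Sig * Δ - Δ = (Sig - 1) * Δ := by rw [Matrix.sub_mul, Matrix.one_mul]
    rw [heq2]
    calc opNorm ((Sig - 1) * Δ) ≤ opNorm (Sig - 1) * opNorm Δ := opNorm_mul_le _ _
      _ ≤ ε * opNorm Δ := mul_le_mul_of_nonneg_right hSig (opNorm_nonneg Δ)
  have hclose : opNorm (A0 * B0 - Δ) ≤ ε * opNorm Δ := by rw [hA0B0]; exact hGmD
  -- Weyl + Eckart-Young: the (rs)-th singular value of SG is at least lam/2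
  have htd : rs - 1 < d := by omega
  have htk : rs - 1 < k := by omega
  set it : Fin d := ⟨rs - 1, htd⟩ with hit
  set ik : Fin k := ⟨rs - 1, htk⟩ with hik
  set c0 := SG it ik with hc0def
  have hc0nn : 0 ≤ c0 := hSGnn it ik
  have hEY : sval rs (Sig * Δ) ≤ c0 := by
    set Dp : Matrix (Fin d) (Fin d) ℝ :=
      Matrix.diagonal (fun i : Fin d => if (i : ℕ) < rs - 1 then (1 : ℝ) else 0) with hDp
    have hrankDp : Dp.rank ≤ rs - 1 := by
      rw [hDp, Matrix.rank_diagonal]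
      have hinj : Function.Injective
          (fun x : {i : Fin d // (if (i : ℕ) < rs - 1 then (1 : ℝ) else 0) ≠ 0} =>
            (⟨(x.1 : ℕ), by by_contra hc; exact x.2 (if_neg hc)⟩ : Fin (rs - 1))) := by
        intro x y hxy
        have h2 := congrArg Fin.val hxy
        simp only at h2
        exact Subtype.ext (Fin.ext h2)
      have := Fintype.card_le_of_injective _ hinj
      simpa using this
    set N := UG * (Dp * SG) * VGᵀ with hN
    have hrankN : N.rank < rs := by
      have h1 : N.rank ≤ (Dp * SG).rank :=
        le_trans (Matrix.rank_mul_le_left _ VGᵀ) (Matrix.rank_mul_le_right UG _)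
      have h2 : (Dp * SG).rank ≤ Dp.rank := Matrix.rank_mul_le_left Dp SG
      omega
    have hGN : Sig * Δ - N = UG * (SG - Dp * SG) * VGᵀ := by
      rw [hGsvd, hN, ← Matrix.sub_mul, ← Matrix.mul_sub]
    have hnorm1 : opNorm (Sig * Δ - N) = opNorm (SG - Dp * SG) := by
      rw [hGN, opNorm_mul_orth VG hVG' (UG * (SG - Dp * SG)),
        opNorm_orth_mul UG hUG' (SG - Dp * SG)]
    have hentry : ∀ (i : Fin d) (j : Fin k),
        (SG - Dp * SG) i j = if (i : ℕ) < rs - 1 then 0 else SG i j := by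
      intro i j
      rw [Matrix.sub_apply, hDp, Matrix.diagonal_mul]
      by_cases h : (i : ℕ) < rs - 1 <;> simp [h]
    have hdl : opNorm (SG - Dp * SG) ≤ c0 := by
      apply opNorm_le_of_diagLike _ _ hc0nn
      · intro i j hij
        rw [hentry i j, hSGdiag i j hij]
        split <;> rfl
      · intro i j hij
        rw [hentry i j]
        by_cases h : (i : ℕ) < rs - 1
        · rw [if_pos h]; simpa using hc0nn
        · rw [if_neg h, abs_of_nonneg (hSGnn i j)]
          exact hSGanti it i ik j rfl hij (le_of_not_gt h)
    calc sval rs (Sig * Δ) ≤ opNorm (Sig * Δ - N) := sval_le _ N hrankN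
      _ = opNorm (SG - Dp * SG) := hnorm1
      _ ≤ c0 := hdl
  have hWeyl : lam ≤ sval rs (Sig * Δ) + opNorm (Δ - Sig * Δ) :=
    sval_le_sval_add rs hrs0 Δ (Sig * Δ)
  have hnegnorm : opNorm (Δ - Sig * Δ) = opNorm (Sig * Δ - Δ) := by
    rw [show Δ - Sig * Δ = -(Sig * Δ - Δ) from (neg_sub _ _).symm, opNorm_neg]
  have hc0half : lam / 2 ≤ c0 := by
    rw [hnegnorm] at hWeyl
    linarith
  -- sqrt comparison
  have hsqrt_half : Real.sqrt lam / 2 ≤ Real.sqrt c0 := by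
    have h4 : Real.sqrt lam / 2 = Real.sqrt (lam / 4) := by
      rw [show lam / 4 = lam / 2 ^ 2 by norm_num,
        Real.sqrt_div (le_of_lt hlam), Real.sqrt_sq (by norm_num : (0:ℝ) ≤ 2)]
    rw [h4]
    apply Real.sqrt_le_sqrt
    linarith
  -- the weight vector
  set w : Fin r → ℝ := fun c => SG (Fin.castLE hrd c) (Fin.castLE hrk c) with hw
  have hcw : ∀ j : Fin r, (j : ℕ) < rs → c0 ≤ w j := by
    intro j hj
    exact hSGanti (Fin.castLE hrd j) it (Fin.castLE hrk j) ik rfl rfl (by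
      show (j : ℕ) ≤ rs - 1
      omega)
  have hsqS : sqrtS * sqrtS = Matrix.diagonal w := by
    have hww : (fun c => Real.sqrt (w c) * Real.sqrt (w c)) = w :=
      funext fun c => Real.mul_self_sqrt (hSGnn _ _)
    rw [hsqrtS, Matrix.diagonal_mul_diagonal, hww]
  have hsqT : sqrtSᵀ = sqrtS := by rw [hsqrtS, Matrix.diagonal_transpose]
  refine ⟨hclose, hstep2, ?_, ?_⟩
  · -- A0
    have hUr1 : (UG.submatrix id (Fin.castLE hrd))ᵀ * (UG.submatrix id (Fin.castLE hrd)) = 1 :=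
      submatrix_orth hrd UG hUG'
    have hgramA : A0ᵀ * A0 = Matrix.diagonal w := by
      rw [hA0, Matrix.transpose_mul, hsqT,
        Matrix.mul_assoc sqrtS _ _,
        ← Matrix.mul_assoc (UG.submatrix id (Fin.castLE hrd))ᵀ (UG.submatrix id (Fin.castLE hrd))
          sqrtS, hUr1, Matrix.one_mul, hsqS]
    have hswA : Real.sqrt c0 ≤ sval rs A0 :=
      le_sval_of_gram hrs0 hrs A0 w hgramA c0 hc0nn hcw
    linarith
  · -- B0
    have hVr1 : (VG.submatrix id (Fin.castLE hrk))ᵀ * (VG.submatrix id (Fin.castLE hrk)) = 1 :=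
      submatrix_orth hrk VG hVG'
    have hgramB : B0ᵀᵀ * B0ᵀ = Matrix.diagonal w := by
      rw [Matrix.transpose_transpose, hB0, Matrix.transpose_mul, hsqT,
        Matrix.mul_assoc sqrtS _ _, Matrix.transpose_transpose,
        ← Matrix.mul_assoc (VG.submatrix id (Fin.castLE hrk))ᵀ (VG.submatrix id (Fin.castLE hrk))
          sqrtS, hVr1, Matrix.one_mul, hsqS]
    have hswB : Real.sqrt c0 ≤ sval rs B0ᵀ :=
      le_sval_of_gram hrs0 hrs B0ᵀ w hgramB c0 hc0nn hcw
    rw [sval_transpose hrs0 B0] at hswB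
    linarith
end

section
/- Let w ∈ ℝ^d be nonzero and x ∼ N(0, I_d). With σ the ReLU and σ' its derivative (indicator of positivity), E[x σ'(xᵀw) σ(xᵀw)] = (1/2) w. -/
/-!
Since `σ'(t) σ(t) = max 0 t = (t + |t|) / 2`, the expectation splits into two halves.
`E[⟪w, x⟫ x]` is the covariance operator of the standard Gaussian, the identity, applied to `w`;
`E[|⟪w, x⟫| x]` vanishes because the integrand is odd and the Gaussian is symmetric.
-/

open MeasureTheory ProbabilityTheory
open scoped RealInnerProductSpace

theorem integral_eq_zero_of_odd {G F : Type*} [AddGroup G] [MeasurableSpace G] [MeasurableNeg G]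
    [NormedAddCommGroup F] [NormedSpace ℝ F] (μ : Measure G) [μ.IsNegInvariant] {f : G → F}
    (hf : ∀ x, f (-x) = -f x) : ∫ x, f x ∂μ = 0 := by
  have h := integral_neg_eq_self f μ
  simp only [hf, integral_neg] at h
  linear_combination (norm := module) (-(1 / 2 : ℝ)) • h

namespace ProbabilityTheory

variable {E : Type*} [NormedAddCommGroup E] [InnerProductSpace ℝ E] [FiniteDimensional ℝ E]
  [MeasurableSpace E] [BorelSpace E]

instance isNegInvariant_stdGaussian : (stdGaussian E).IsNegInvariant :=
  ⟨stdGaussian_map (LinearIsometryEquiv.neg ℝ)⟩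

lemma covarianceOperator_stdGaussian :
    covarianceOperator (stdGaussian E) = ContinuousLinearMap.id ℝ E := by
  ext x
  refine ext_inner_right ℝ fun y => ?_
  rw [covarianceOperator_inner IsGaussian.memLp_two_id, ← innerSL_apply_apply ℝ,
    ← covarianceBilin_stdGaussian, covarianceBilin_apply IsGaussian.memLp_two_id]
  simp

lemma integral_inner_smul_stdGaussian (w : E) : ∫ x, ⟪w, x⟫ • x ∂stdGaussian E = w := by
  rw [← covarianceOperator_apply IsGaussian.memLp_two_id, covarianceOperator_stdGaussian]
  rfl

lemma integral_abs_inner_smul_stdGaussian (w : E) :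
    ∫ x, |⟪w, x⟫| • x ∂stdGaussian E = 0 :=
  integral_eq_zero_of_odd _ fun x => by simp only [inner_neg_right, abs_neg, smul_neg]

lemma integral_max_zero_inner_smul_stdGaussian (w : E) :
    ∫ x, max 0 ⟪w, x⟫ • x ∂stdGaussian E = (1 / 2 : ℝ) • w := by
  have integrable_smul_id {c : E → ℝ} (hc : MemLp c 2 (stdGaussian E)) :
      Integrable (fun x => c x • x) (stdGaussian E) :=
    memLp_one_iff_integrable.1 (IsGaussian.memLp_two_id.smul hc)
  have hinner : MemLp (fun x => ⟪w, x⟫) 2 (stdGaussian E) :=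
    IsGaussian.memLp_two_id.const_inner w
  have max_zero_eq (t : ℝ) : max 0 t = (1 / 2 : ℝ) * (t + |t|) := by
    rcases le_total 0 t with ht | ht
    · rw [max_eq_right ht, abs_of_nonneg ht]; ring
    · rw [max_eq_left ht, abs_of_nonpos ht]; ring
  simp_rw [max_zero_eq, mul_smul, add_smul]
  rw [integral_smul, integral_add (integrable_smul_id hinner)
      (integrable_smul_id (c := fun x => |⟪w, x⟫|) hinner.abs),
    integral_inner_smul_stdGaussian, integral_abs_inner_smul_stdGaussian, add_zero]

end ProbabilityTheory

theorem gaussian_relu_selfcorrelation_gradient_general {d : ℕ}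
    (w : EuclideanSpace ℝ (Fin d)) :
    letI μ : Measure (EuclideanSpace ℝ (Fin d)) :=
      (Measure.pi fun _ : Fin d => ProbabilityTheory.gaussianReal 0 1).map
        (MeasurableEquiv.toLp 2 (Fin d → ℝ))
    (∫ x, ((if 0 < (inner ℝ x w : ℝ) then (1 : ℝ) else 0) * max 0 (inner ℝ x w : ℝ)) • x ∂μ)
      = (1 / 2 : ℝ) • w := by
  have relu_deriv_mul_relu (t : ℝ) : (if 0 < t then (1 : ℝ) else 0) * max 0 t = max 0 t := by
    split_ifs with ht
    · rw [one_mul]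
    · rw [zero_mul, max_eq_left (not_lt.mp ht)]
  simp_rw [relu_deriv_mul_relu, real_inner_comm w]
  exact (map_pi_eq_stdGaussian (ι := Fin d)).symm ▸ integral_max_zero_inner_smul_stdGaussian w

/-- `E_{x ~ N(0, I_d)}[x σ'(xᵀw) σ(xᵀw)] = w / 2` for the ReLU `σ`. -/
theorem gaussian_relu_selfcorrelation_gradient {d : ℕ}
    (w : EuclideanSpace ℝ (Fin d)) (hw : w ≠ 0) :
    letI μ : Measure (EuclideanSpace ℝ (Fin d)) :=
      (Measure.pi fun _ : Fin d => ProbabilityTheory.gaussianReal 0 1).map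
        (MeasurableEquiv.toLp 2 (Fin d → ℝ))
    (∫ x, ((if 0 < (inner ℝ x w : ℝ) then (1 : ℝ) else 0) * max 0 (inner ℝ x w : ℝ)) • x ∂μ)
      = (1 / 2 : ℝ) • w :=
  gaussian_relu_selfcorrelation_gradient_general w
end
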